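/- arXiv:1208.1259 — 5 statements merged into one kernel-verified Lean document; each statement's English description precedes it below -/
import Mathlib

section
/- Under the assumptions D(1-2/k) ≥ f, k ≥ 2, k | D, the variance of the number of empty bins satisfies Var(N_emp)/k² < (1/k)·(E(N_emp)/k)·(1 - E(N_emp)/k), i.e., it is strictly smaller than the variance of a binomial with the same mean (assuming 0 < f). -/
open scoped BigOperators

/-- The number of empty bins (among `k` equal consecutive bins of `{0,...,D-1}`)
for the subset `s`. -/
def NempBins (D k : ℕ) (s : Finset (Fin D)) : ℕ :=
  ((Finset.range k).filter (fun j => ∀ x ∈ s, x.val / (D / k) ≠ j)).card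

lemma divIff (m : ℕ) (hm : 0 < m) (a j : ℕ) : a / m = j ↔ j*m ≤ a ∧ a < j*m + m := by
  constructor
  · rintro rfl
    exact ⟨Nat.div_mul_le_self a m, Nat.lt_div_mul_add hm⟩
  · rintro ⟨hl, hr⟩
    exact Nat.div_eq_of_lt_le hl (by rw [Nat.add_mul]; omega)

lemma binCard (D m k j : ℕ) (hD : D = k * m) (hm : 0 < m) (hj : j < k) :
    (Finset.univ.filter (fun x : Fin D => x.val / m = j)).card = m := by
  have h : (Finset.univ.filter (fun x : Fin D => x.val / m = j)).card
      = (Finset.univ : Finset (Fin m)).card := by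
    apply Finset.card_bij' (fun (a : Fin D) _ => (⟨a.val - j*m, by
        have := (Finset.mem_filter.mp ‹_›).2
        rw [divIff m hm] at this
        omega⟩ : Fin m))
      (fun (b : Fin m) _ => (⟨j*m + b.val, by nlinarith [b.isLt]⟩ : Fin D))
    · intro a ha
      have := (Finset.mem_filter.mp ha).2
      rw [divIff m hm] at this
      apply Fin.ext; simp; omega
    · intro b hb
      apply Fin.ext; simp
    · intro a ha; simp
    · intro b hb
      simp only [Finset.mem_filter, Finset.mem_univ, true_and]
      rw [divIff m hm]
      exact ⟨Nat.le_add_right _ _, by omega⟩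
  simpa using h

lemma compOne (D m k j : ℕ) (hD : D = k * m) (hm : 0 < m) (hj : j < k) :
    (Finset.univ.filter (fun x : Fin D => x.val / m ≠ j)).card = D - m := by
  have h := Finset.card_filter_add_card_filter_not
    (s := (Finset.univ : Finset (Fin D))) (p := fun x : Fin D => x.val / m = j)
  rw [binCard D m k j hD hm hj] at h
  simp only [Finset.card_univ, Fintype.card_fin] at h
  simp only [ne_eq]
  omega

lemma compTwo (D m k j j' : ℕ) (hD : D = k * m) (hm : 0 < m) (hj : j < k) (hj' : j' < k)
    (hne : j ≠ j') :
    (Finset.univ.filter (fun x : Fin D => x.val / m ≠ j ∧ x.val / m ≠ j')).card = D - 2 * m := by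
  have heq : (Finset.univ.filter (fun x : Fin D => x.val / m ≠ j ∧ x.val / m ≠ j'))
      = Finset.univ.filter (fun x : Fin D => ¬ (x.val / m = j ∨ x.val / m = j')) := by
    apply Finset.filter_congr; intro x _; simp [not_or]
  have hunion : (Finset.univ.filter (fun x : Fin D => x.val / m = j ∨ x.val / m = j')).card
      = 2 * m := by
    rw [Finset.filter_or, Finset.card_union_of_disjoint, binCard D m k j hD hm hj,
      binCard D m k j' hD hm hj']
    · omega
    · rw [Finset.disjoint_left]
      intro a ha ha'
      exact hne ((Finset.mem_filter.mp ha).2 ▸ (Finset.mem_filter.mp ha').2 ▸ rfl)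
  have h := Finset.card_filter_add_card_filter_not
    (s := (Finset.univ : Finset (Fin D))) (p := fun x : Fin D => x.val / m = j ∨ x.val / m = j')
  rw [hunion] at h
  simp only [Finset.card_univ, Fintype.card_fin] at h
  rw [heq]
  omega

lemma filterEq (D f : ℕ) (P : Fin D → Prop) [DecidablePred P] :
    (Finset.powersetCard f (Finset.univ : Finset (Fin D))).filter (fun s => ∀ x ∈ s, P x)
      = Finset.powersetCard f (Finset.univ.filter P) := by
  ext s
  simp only [Finset.mem_filter, Finset.mem_powersetCard, Finset.subset_iff,
    Finset.mem_univ, true_and, Finset.mem_filter]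
  tauto

lemma countOne (D f : ℕ) (P : Fin D → Prop) [DecidablePred P] :
    ((Finset.powersetCard f (Finset.univ : Finset (Fin D))).filter
      (fun s => ∀ x ∈ s, P x)).card = (Finset.univ.filter P).card.choose f := by
  rw [filterEq, Finset.card_powersetCard]

lemma descLe (m : ℕ) : ∀ (f n : ℕ), Nat.descFactorial (n - m) f * Nat.descFactorial (n + m) f ≤ Nat.descFactorial n f ^ 2 := by
  intro f
  induction f with
  | zero => simp
  | succ f ih =>
    intro n
    rw [Nat.descFactorial_succ, Nat.descFactorial_succ, Nat.descFactorial_succ]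
    have hfac : (n - m - f) * (n + m - f) ≤ (n - f) ^ 2 := by
      rcases le_or_gt (m + f) n with h | h
      · zify [show m ≤ n - f by omega, show f ≤ n + m by omega, show f ≤ n - m by omega,
          show m ≤ n by omega, show f ≤ n by omega]
        nlinarith [sq_nonneg (m : ℤ)]
      · have : n - m - f = 0 := by omega
        simp [this]
    calc (n - m - f) * Nat.descFactorial (n - m) f * ((n + m - f) * Nat.descFactorial (n + m) f)
        = ((n - m - f) * (n + m - f)) * (Nat.descFactorial (n - m) f * Nat.descFactorial (n + m) f) := by ring
      _ ≤ (n - f) ^ 2 * Nat.descFactorial n f ^ 2 := Nat.mul_le_mul hfac (ih n)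
      _ = ((n - f) * Nat.descFactorial n f) ^ 2 := by ring

lemma descLt (m n f : ℕ) (hm : 1 ≤ m) (hf : 1 ≤ f) (hfn : f ≤ n - m) (hmn : m ≤ n) :
    Nat.descFactorial (n - m) f * Nat.descFactorial (n + m) f < Nat.descFactorial n f ^ 2 := by
  obtain ⟨f', rfl⟩ : ∃ f', f = f' + 1 := ⟨f - 1, by omega⟩
  rw [Nat.descFactorial_succ, Nat.descFactorial_succ, Nat.descFactorial_succ]
  have hfac : (n - m - f') * (n + m - f') < (n - f') ^ 2 := by
    have hm2 : (m : ℤ) + 1 ≤ (n : ℤ) - f' := by omega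
    zify [show m + f' ≤ n by omega, show f' ≤ n + m by omega, show f' ≤ n - m by omega,
      show f' ≤ n by omega, hmn]
    nlinarith
  have hpos : 0 < Nat.descFactorial n f' ^ 2 := by
    have : Nat.descFactorial n f' ≠ 0 := by
      rw [Ne, Nat.descFactorial_eq_zero_iff_lt]; omega
    positivity
  calc (n - m - f') * Nat.descFactorial (n - m) f' * ((n + m - f') * Nat.descFactorial (n + m) f')
      = ((n - m - f') * (n + m - f')) * (Nat.descFactorial (n - m) f' * Nat.descFactorial (n + m) f') := by ring
    _ ≤ ((n - m - f') * (n + m - f')) * Nat.descFactorial n f' ^ 2 := Nat.mul_le_mul_left _ (descLe m f' n)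
    _ < (n - f') ^ 2 * Nat.descFactorial n f' ^ 2 := (Nat.mul_lt_mul_right hpos).mpr hfac
    _ = ((n - f') * Nat.descFactorial n f') ^ 2 := by ring

lemma chooseLt (m n f : ℕ) (hm : 1 ≤ m) (hf : 1 ≤ f) (hfn : f ≤ n - m) (hmn : m ≤ n) :
    Nat.choose (n - m) f * Nat.choose (n + m) f < Nat.choose n f ^ 2 := by
  have h := descLt m n f hm hf hfn hmn
  rw [Nat.descFactorial_eq_factorial_mul_choose, Nat.descFactorial_eq_factorial_mul_choose,
    Nat.descFactorial_eq_factorial_mul_choose] at h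
  have hfp : 0 < f.factorial ^ 2 := pow_pos f.factorial_pos 2
  nlinarith [h]

/-- The variance of the number of empty bins is strictly below its binomial analog:
`Var(N_emp)/k² < (1/k)(E/k)(1-E/k)`. -/
theorem stmt_3 (D k f : ℕ) (hD : 1 ≤ D) (hk : 2 ≤ k) (hkD : k ∣ D)
    (hf0 : 0 < f) (hf : f ≤ D - 2 * (D / k)) :
    let Ω := Finset.powersetCard f (Finset.univ : Finset (Fin D))
    let E : ℝ := (∑ s ∈ Ω, (NempBins D k s : ℝ)) / (Ω.card : ℝ)
    let V : ℝ := (∑ s ∈ Ω, (NempBins D k s : ℝ) ^ 2) / (Ω.card : ℝ) - E ^ 2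
    V / (k : ℝ) ^ 2 < (1 / (k : ℝ)) * (E / k) * (1 - E / k) := by
  intro Ω E V
  obtain ⟨m, hDm⟩ := hkD
  have hk0 : 0 < k := by omega
  have hmk : D / k = m := by rw [hDm, Nat.mul_div_cancel_left m hk0]
  have hm : 0 < m := Nat.pos_of_ne_zero (fun h => by subst h; simp at hDm; omega)
  rw [hmk] at hf
  have hDf : 2 * m + f ≤ D := by
    have : 2 * m ≤ D := by rw [hDm]; nlinarith
    omega
  set A := (D - m).choose f with hA_def
  set B := (D - 2 * m).choose f with hB_def
  set N := D.choose f with hN_def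
  have hΩcard : Ω.card = N := by
    simp [Ω, Finset.card_powersetCard, hN_def]
  have hNpos : 0 < N := Nat.choose_pos (by omega)
  have hBA : B ≤ A := Nat.choose_le_choose f (by omega)
  -- key inequality B * N < A ^ 2
  have hkey : B * N < A ^ 2 := by
    have h := chooseLt m (D - m) f hm hf0 (by omega) (by omega)
    rw [show D - m - m = D - 2 * m by omega, show D - m + m = D by omega] at h
    exact h
  -- sum 1
  have hsum1 : ∑ s ∈ Ω, NempBins D k s = k * A := by
    have hexp : ∀ s ∈ Ω, NempBins D k s
        = ∑ j ∈ Finset.range k, if (∀ x ∈ s, x.val / m ≠ j) then 1 else 0 := by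
      intro s _
      rw [NempBins, hmk, Finset.card_filter]
    rw [Finset.sum_congr rfl hexp, Finset.sum_comm]
    have hinner : ∀ j ∈ Finset.range k,
        (∑ s ∈ Ω, if (∀ x ∈ s, x.val / m ≠ j) then 1 else 0) = A := by
      intro j hj
      rw [← Finset.card_filter]
      rw [show (Ω.filter (fun s => ∀ x ∈ s, x.val / m ≠ j)).card
          = (Finset.univ.filter (fun x : Fin D => x.val / m ≠ j)).card.choose f from
        countOne D f _]
      rw [compOne D m k j hDm hm (Finset.mem_range.mp hj)]
    rw [Finset.sum_congr rfl hinner, Finset.sum_const, Finset.card_range, smul_eq_mul]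
  -- sum 2
  have hsum2 : ∑ s ∈ Ω, (NempBins D k s) ^ 2 = k * A + k * (k - 1) * B := by
    have hexp : ∀ s ∈ Ω, (NempBins D k s) ^ 2
        = ∑ j ∈ Finset.range k, ∑ j' ∈ Finset.range k,
            if (∀ x ∈ s, x.val / m ≠ j ∧ x.val / m ≠ j') then 1 else 0 := by
      intro s _
      rw [NempBins, hmk, Finset.card_filter, sq, Finset.sum_mul_sum]
      refine Finset.sum_congr rfl fun j _ => Finset.sum_congr rfl fun j' _ => ?_
      by_cases h1 : ∀ x ∈ s, x.val / m ≠ j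
      · by_cases h2 : ∀ x ∈ s, x.val / m ≠ j'
        · have h3 : ∀ x ∈ s, x.val / m ≠ j ∧ x.val / m ≠ j' := fun x hx => ⟨h1 x hx, h2 x hx⟩
          rw [if_pos h1, if_pos h2, if_pos h3]
          norm_num
        · have h3 : ¬ ∀ x ∈ s, x.val / m ≠ j ∧ x.val / m ≠ j' :=
            fun h => h2 fun x hx => (h x hx).2
          rw [if_pos h1, if_neg h2, if_neg h3]
          norm_num
      · have h3 : ¬ ∀ x ∈ s, x.val / m ≠ j ∧ x.val / m ≠ j' :=
          fun h => h1 fun x hx => (h x hx).1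
        rw [if_neg h1, if_neg h3]
        norm_num
    rw [Finset.sum_congr rfl hexp, Finset.sum_comm]
    have hswap : ∀ j ∈ Finset.range k,
        (∑ s ∈ Ω, ∑ j' ∈ Finset.range k,
          if (∀ x ∈ s, x.val / m ≠ j ∧ x.val / m ≠ j') then 1 else 0)
        = ∑ j' ∈ Finset.range k, (if j = j' then A else B) := by
      intro j hj
      rw [Finset.sum_comm]
      refine Finset.sum_congr rfl fun j' hj' => ?_
      rw [← Finset.card_filter]
      rw [show (Ω.filter (fun s => ∀ x ∈ s, x.val / m ≠ j ∧ x.val / m ≠ j')).card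
          = (Finset.univ.filter (fun x : Fin D => x.val / m ≠ j ∧ x.val / m ≠ j')).card.choose f from
        countOne D f _]
      by_cases hjj : j = j'
      · subst hjj
        rw [show (Finset.univ.filter (fun x : Fin D => x.val / m ≠ j ∧ x.val / m ≠ j))
            = Finset.univ.filter (fun x : Fin D => x.val / m ≠ j) from by
          apply Finset.filter_congr; intro x _; tauto]
        rw [compOne D m k j hDm hm (Finset.mem_range.mp hj)]
        simp [hA_def]
      · rw [if_neg hjj,
          compTwo D m k j j' hDm hm (Finset.mem_range.mp hj) (Finset.mem_range.mp hj') hjj]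
    rw [Finset.sum_congr rfl hswap]
    have hrow : ∀ j ∈ Finset.range k,
        (∑ j' ∈ Finset.range k, if j = j' then A else B) = A + (k - 1) * B := by
      intro j hj
      have : ∀ j' ∈ Finset.range k, (if j = j' then A else B)
          = (if j = j' then A - B else 0) + B := by
        intro j' _; split_ifs <;> omega
      rw [Finset.sum_congr rfl this, Finset.sum_add_distrib, Finset.sum_ite_eq, if_pos hj,
        Finset.sum_const, Finset.card_range, smul_eq_mul]
      zify [hBA, show 1 ≤ k by omega]
      ring
    rw [Finset.sum_congr rfl hrow, Finset.sum_const, Finset.card_range, smul_eq_mul]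
    zify [hBA, show 1 ≤ k by omega]
    ring
  -- now the real computation
  have hEN : (∑ s ∈ Ω, (NempBins D k s : ℝ)) = (k : ℝ) * A := by
    rw [← Nat.cast_sum, hsum1]; push_cast; ring
  have hE2 : (∑ s ∈ Ω, (NempBins D k s : ℝ) ^ 2) = (k : ℝ) * A + (k : ℝ) * ((k : ℝ) - 1) * B := by
    have : (∑ s ∈ Ω, (NempBins D k s : ℝ) ^ 2) = ((∑ s ∈ Ω, (NempBins D k s) ^ 2 : ℕ) : ℝ) := by
      push_cast; ring
    rw [this, hsum2]
    push_cast [show (1 : ℕ) ≤ k by omega]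
    ring
  have hNR : (0 : ℝ) < (N : ℝ) := by exact_mod_cast hNpos
  have hKR : (2 : ℝ) ≤ (k : ℝ) := by exact_mod_cast hk
  have hkeyR : (B : ℝ) * N < (A : ℝ) ^ 2 := by exact_mod_cast hkey
  show V / (k : ℝ) ^ 2 < (1 / (k : ℝ)) * (E / k) * (1 - E / k)
  have hEval : E = (k : ℝ) * A / N := by
    rw [show E = (∑ s ∈ Ω, (NempBins D k s : ℝ)) / (Ω.card : ℝ) from rfl, hEN, hΩcard]
  have hVval : V = ((k : ℝ) * A + (k : ℝ) * ((k : ℝ) - 1) * B) / N - ((k : ℝ) * A / N) ^ 2 := by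
    rw [show V = (∑ s ∈ Ω, (NempBins D k s : ℝ) ^ 2) / (Ω.card : ℝ) - E ^ 2 from rfl,
      hE2, hΩcard, hEval]
  rw [hVval, hEval]
  have hKpos : (0 : ℝ) < (k : ℝ) := by linarith
  rw [div_lt_iff₀ (by positivity), show (1 / (k:ℝ)) * ((k:ℝ) * A / N / k) * (1 - (k:ℝ) * A / N / k) * (k:ℝ)^2
      = (k:ℝ) * (A / N) * (1 - A / N) from by field_simp]
  have h1 : ((k : ℝ) * A + (k : ℝ) * ((k : ℝ) - 1) * B) / N - ((k : ℝ) * A / N) ^ 2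
      = ((k * A * N + k * (k - 1) * B * N - k ^ 2 * A ^ 2) : ℝ) / N ^ 2 := by
    field_simp
  have h2 : (k:ℝ) * (A / N) * (1 - A / N) = ((k * A * N - k * A ^ 2) : ℝ) / N ^ 2 := by
    field_simp
  rw [h1, h2, div_lt_div_iff₀ (by positivity) (by positivity)]
  nlinarith [mul_pos (mul_pos (mul_pos hKpos (sub_pos.mpr (by linarith : (1:ℝ) < (k:ℝ))))
    (sub_pos.mpr hkeyR)) (pow_pos hNR 2)]
end

section
/- For positive integers D, k, f with k | D, k ≥ 2, f ≤ D(1-1/k), the following combinatorial identity holds: k·∏_{j=0}^{f-1} (D(1-1/k)-j)/(D-j) = Σ_{j=0}^{k-1} j · Σ_{s=0}^{k-j} (-1)^s · k!/(j!s!(k-j-s)!) · ∏_{t=0}^{f-1} (D(1-(j+s)/k)-t)/(D-t). -/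
open scoped BigOperators
open Finset

lemma alt_real (n : ℕ) :
    ∑ i ∈ range (n + 1), (-1 : ℝ) ^ i * (n.choose i : ℝ) = if n = 0 then 1 else 0 := by
  have h := Int.alternating_sum_range_choose (n := n)
  have h2 := congrArg (fun z : ℤ => (z : ℝ)) h
  push_cast at h2
  simpa using h2

lemma Ssum (m : ℕ) :
    ∑ j ∈ range (m + 1), (j : ℝ) * (-1) ^ (m - j) * (m.choose j : ℝ)
      = if m = 1 then 1 else 0 := by
  cases m with
  | zero => simp
  | succ n =>
    rw [Finset.sum_range_succ']
    have key : ∀ i ∈ range (n + 1),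
        ((i + 1 : ℕ) : ℝ) * (-1) ^ (n + 1 - (i + 1)) * ((n + 1).choose (i + 1) : ℝ)
          = ((n : ℝ) + 1) * (-1) ^ n * ((-1) ^ i * (n.choose i : ℝ)) := by
      intro i hi
      have hi' : i ≤ n := Nat.lt_succ_iff.mp (mem_range.mp hi)
      have h2 : ((i + 1 : ℕ) : ℝ) * ((n + 1).choose (i + 1) : ℝ)
          = ((n : ℝ) + 1) * (n.choose i : ℝ) := by
        have := Nat.add_one_mul_choose_eq n i
        have := congrArg (fun z : ℕ => (z : ℝ)) this
        push_cast at this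
        push_cast
        linarith [this]
      have hsq : (-1 : ℝ) ^ i * (-1) ^ i = 1 := by
        rw [← pow_add, ← two_mul, pow_mul]; norm_num
      have h3 : (-1 : ℝ) ^ (n + 1 - (i + 1)) = (-1) ^ n * (-1) ^ i := by
        have hni : n + 1 - (i + 1) = n - i := by omega
        rw [hni]
        calc (-1 : ℝ) ^ (n - i) = (-1) ^ (n - i) * ((-1) ^ i * (-1) ^ i) := by
              rw [hsq, mul_one]
          _ = ((-1) ^ (n - i) * (-1) ^ i) * (-1) ^ i := by ring
          _ = (-1) ^ n * (-1) ^ i := by rw [← pow_add, Nat.sub_add_cancel hi']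
      calc ((i + 1 : ℕ) : ℝ) * (-1) ^ (n + 1 - (i + 1)) * ((n + 1).choose (i + 1) : ℝ)
          = (((i + 1 : ℕ) : ℝ) * ((n + 1).choose (i + 1) : ℝ)) * (-1) ^ (n + 1 - (i + 1)) := by
            ring
        _ = (((n : ℝ) + 1) * (n.choose i : ℝ)) * ((-1) ^ n * (-1) ^ i) := by rw [h2, h3]
        _ = ((n : ℝ) + 1) * (-1) ^ n * ((-1) ^ i * (n.choose i : ℝ)) := by ring
    rw [Finset.sum_congr rfl key]
    rw [← Finset.mul_sum, alt_real n]
    rcases Nat.eq_zero_or_pos n with hn | hn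
    · subst hn; norm_num
    · have hn1 : n ≠ 0 := hn.ne'
      simp [hn1, Nat.succ_ne_succ.mpr hn1]

lemma coeff (k m j : ℕ) (hj : j ≤ m) (hm : m ≤ k) :
    (k.factorial : ℝ) / ((j.factorial : ℝ) * ((m - j).factorial : ℝ) * ((k - m).factorial : ℝ))
      = (k.choose m : ℝ) * (m.choose j : ℝ) := by
  have h1 := Nat.choose_mul_factorial_mul_factorial hj
  have h2 := Nat.choose_mul_factorial_mul_factorial hm
  have hne : ((j.factorial : ℝ) * ((m - j).factorial : ℝ) * ((k - m).factorial : ℝ)) ≠ 0 := by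
    positivity
  rw [div_eq_iff hne]
  have : k.choose m * m.choose j * (j.factorial * (m - j).factorial * (k - m).factorial)
      = k.factorial := by
    calc k.choose m * m.choose j * (j.factorial * (m - j).factorial * (k - m).factorial)
        = k.choose m * (m.choose j * j.factorial * (m - j).factorial) * (k - m).factorial := by
          ring
      _ = k.choose m * m.factorial * (k - m).factorial := by rw [h1]
      _ = k.factorial := h2
  exact_mod_cast this.symm

/-- The combinatorial identity obtained from `E(N_emp) = Σ_j j·Pr(N_emp = j)`:
`k·∏_{j<f}(D(1-1/k)-j)/(D-j)
  = Σ_{j<k} j · Σ_{s=0}^{k-j} (-1)^s k!/(j!s!(k-j-s)!) ∏_{t<f}(D(1-(j+s)/k)-t)/(D-t)`. -/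
theorem stmt_6 (D k f : ℕ) (hD : 0 < D) (hk : 2 ≤ k) (hf : 0 < f) (hkD : k ∣ D)
    (hfD : f ≤ D - D / k) :
    (k : ℝ) * ∏ j ∈ Finset.range f, (((D : ℝ) * (1 - 1 / k) - j) / ((D : ℝ) - j))
      = ∑ j ∈ Finset.range k, (j : ℝ) *
          ∑ s ∈ Finset.range (k - j + 1),
            (-1 : ℝ) ^ s *
              ((Nat.factorial k : ℝ) /
                ((Nat.factorial j : ℝ) * (Nat.factorial s) * (Nat.factorial (k - j - s)))) *
              ∏ t ∈ Finset.range f,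
                (((D : ℝ) * (1 - ((j : ℝ) + s) / k) - t) / ((D : ℝ) - t)) := by
  have hk0 : (k : ℝ) ≠ 0 := by positivity
  -- the general term
  set T : ℕ → ℕ → ℝ := fun j s =>
    (j : ℝ) * ((-1 : ℝ) ^ s *
      ((Nat.factorial k : ℝ) /
        ((Nat.factorial j : ℝ) * (Nat.factorial s) * (Nat.factorial (k - j - s)))) *
      ∏ t ∈ Finset.range f,
        (((D : ℝ) * (1 - ((j : ℝ) + s) / k) - t) / ((D : ℝ) - t))) with hT
  -- rewrite RHS with T and push j inside
  have step1 : (∑ j ∈ Finset.range k, (j : ℝ) *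
      ∑ s ∈ Finset.range (k - j + 1),
        (-1 : ℝ) ^ s *
          ((Nat.factorial k : ℝ) /
            ((Nat.factorial j : ℝ) * (Nat.factorial s) * (Nat.factorial (k - j - s)))) *
          ∏ t ∈ Finset.range f,
            (((D : ℝ) * (1 - ((j : ℝ) + s) / k) - t) / ((D : ℝ) - t)))
      = ∑ j ∈ Finset.range k, ∑ s ∈ Finset.range (k - j + 1), T j s := by
    refine Finset.sum_congr rfl fun j _ => ?_
    rw [Finset.mul_sum]
  rw [step1]
  -- extend the outer sum to range (k+1): the extra term vanishes
  have hPk : T k 0 = 0 := by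
    have hzero : ((D : ℝ) * (1 - ((k : ℝ) + (0 : ℕ)) / k) - (0 : ℕ)) / ((D : ℝ) - (0 : ℕ)) = 0 := by
      rw [Nat.cast_zero]
      field_simp
      simp
    have : (∏ t ∈ Finset.range f,
        (((D : ℝ) * (1 - ((k : ℝ) + (0 : ℕ)) / k) - t) / ((D : ℝ) - t))) = 0 := by
      apply Finset.prod_eq_zero (Finset.mem_range.mpr hf)
      push_cast
      push_cast at hzero
      exact hzero
    simp only [hT]
    rw [this]
    ring
  have step2 : (∑ j ∈ Finset.range k, ∑ s ∈ Finset.range (k - j + 1), T j s)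
      = ∑ j ∈ Finset.range (k + 1), ∑ s ∈ Finset.range (k - j + 1), T j s := by
    rw [Finset.sum_range_succ]
    have : (∑ s ∈ Finset.range (k - k + 1), T k s) = T k 0 := by
      simp [Nat.sub_self]
    rw [this, hPk, add_zero]
  rw [step2]
  -- reindex the triangular sum
  have step3 : (∑ j ∈ Finset.range (k + 1), ∑ s ∈ Finset.range (k - j + 1), T j s)
      = ∑ m ∈ Finset.range (k + 1), ∑ j ∈ Finset.range (m + 1), T j (m - j) := by
    rw [Finset.sum_sigma' (Finset.range (k + 1)) (fun j => Finset.range (k - j + 1))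
      (fun j s => T j s)]
    rw [Finset.sum_sigma' (Finset.range (k + 1)) (fun m => Finset.range (m + 1))
      (fun m j => T j (m - j))]
    refine Finset.sum_bij' (fun p _ => ⟨p.1 + p.2, p.1⟩) (fun q _ => ⟨q.2, q.1 - q.2⟩)
      ?_ ?_ ?_ ?_ ?_
    · rintro ⟨j, s⟩ hp
      simp only [Finset.mem_sigma, Finset.mem_range] at hp ⊢
      omega
    · rintro ⟨m, j⟩ hq
      simp only [Finset.mem_sigma, Finset.mem_range] at hq ⊢
      omega
    · rintro ⟨j, s⟩ hp
      simp only [Finset.mem_sigma, Finset.mem_range] at hp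
      have h1 : j + s - j = s := by omega
      simp [h1]
    · rintro ⟨m, j⟩ hq
      simp only [Finset.mem_sigma, Finset.mem_range] at hq
      have h1 : j + (m - j) = m := by omega
      simp [h1]
    · rintro ⟨j, s⟩ hp
      simp only [Finset.mem_sigma, Finset.mem_range] at hp
      simp only [Nat.add_sub_cancel_left]
  rw [step3]
  -- evaluate the inner sums
  have step4 : ∀ m ∈ Finset.range (k + 1),
      (∑ j ∈ Finset.range (m + 1), T j (m - j))
        = (if m = 1 then (1 : ℝ) else 0) * ((k.choose m : ℝ) *
            ∏ t ∈ Finset.range f, (((D : ℝ) * (1 - (m : ℝ) / k) - t) / ((D : ℝ) - t))) := by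
    intro m hm
    have hmk : m ≤ k := Nat.lt_succ_iff.mp (Finset.mem_range.mp hm)
    have hinner : ∀ j ∈ Finset.range (m + 1),
        T j (m - j) = ((j : ℝ) * (-1) ^ (m - j) * (m.choose j : ℝ)) * ((k.choose m : ℝ) *
          ∏ t ∈ Finset.range f, (((D : ℝ) * (1 - (m : ℝ) / k) - t) / ((D : ℝ) - t))) := by
      intro j hj
      have hjm : j ≤ m := Nat.lt_succ_iff.mp (Finset.mem_range.mp hj)
      have hcast : ((j : ℝ) + ((m - j : ℕ) : ℝ)) = (m : ℝ) := by
        have : ((m - j : ℕ) : ℝ) = (m : ℝ) - (j : ℝ) := by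
          push_cast [Nat.cast_sub hjm]; ring
        rw [this]; ring
      have hsub : k - j - (m - j) = k - m := by omega
      rw [hT]
      simp only []
      rw [hsub, hcast, coeff k m j hjm hmk]
      ring
    rw [Finset.sum_congr rfl hinner, ← Finset.sum_mul, Ssum m]
  rw [Finset.sum_congr rfl step4]
  -- only m = 1 survives
  have h1k : (1 : ℕ) ∈ Finset.range (k + 1) := Finset.mem_range.mpr (by omega)
  rw [Finset.sum_eq_single_of_mem 1 h1k (by
    intro m _ hm1
    simp [hm1])]
  simp [Nat.choose_one_right]
end

section
/- Let S₁, S₂ ⊆ {0,...,D-1} with |S₁|=f₁, |S₂|=f₂, |S₁∩S₂|=a, f=f₁+f₂-a, R=a/f, and let π be a uniformly random permutation of {0,...,D-1} with the space divided into k equal bins (k | D, f ≤ D(1-1/k)). Let N_mat count bins where both π(S₁) and π(S₂) are nonempty and their minima in that bin coincide. Then E(N_mat)/k = R·(1 - ∏_{j=0}^{f-1}(D(1-1/k)-j)/(D-j)). -/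
open scoped BigOperators Classical

/-- Restriction of the hashed set `S` to the `j`-th of `k` equal consecutive bins of
`{0,...,D-1}` (each bin has length `D/k`). -/
def hashBin (D k : ℕ) (S : Finset (Fin D)) (j : ℕ) : Finset (Fin D) :=
  S.filter (fun x => x.val / (D / k) = j)

/-- The `j`-th bin is matched: both `π(S₁)` and `π(S₂)` are nonempty in the bin and
their smallest elements in the bin coincide. -/
def matchedBin (D k : ℕ) (π : Equiv.Perm (Fin D)) (S₁ S₂ : Finset (Fin D)) (j : ℕ) : Prop :=
  (hashBin D k (S₁.image π) j).Nonempty ∧ (hashBin D k (S₂.image π) j).Nonempty ∧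
    (hashBin D k (S₁.image π) j).min = (hashBin D k (S₂.image π) j).min

/-- The number of matched bins. -/
noncomputable def Nmat (D k : ℕ) (π : Equiv.Perm (Fin D)) (S₁ S₂ : Finset (Fin D)) : ℕ :=
  ((Finset.range k).filter (fun j => matchedBin D k π S₁ S₂ j)).card

/-- The number of jointly empty bins: bins where both `π(S₁)` and `π(S₂)` are empty. -/
noncomputable def NempJ (D k : ℕ) (π : Equiv.Perm (Fin D)) (S₁ S₂ : Finset (Fin D)) : ℕ :=
  ((Finset.range k).filter (fun j =>
    hashBin D k (S₁.image π) j = ∅ ∧ hashBin D k (S₂.image π) j = ∅)).card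


open scoped Nat
open Finset Equiv

lemma card_fix (D : ℕ) (S : Finset (Fin D)) :
    (Finset.univ.filter (fun σ : Equiv.Perm (Fin D) => ∀ x ∈ S, σ x = x)).card
      = (D - S.card)! := by
  rw [← Fintype.card_subtype]
  have e1 : {σ : Equiv.Perm (Fin D) // ∀ x ∈ S, σ x = x}
      ≃ {σ : Equiv.Perm (Fin D) // ∀ a, ¬ (a ∉ S) → σ a = a} :=
    Equiv.subtypeEquivRight (by
      intro σ
      constructor
      · intro h a ha; exact h a (not_not.mp ha)
      · intro h a ha; exact h a (fun h' => h' ha))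
  rw [Fintype.card_congr e1, ← Fintype.card_congr (Equiv.Perm.subtypeEquivSubtypePerm
      (fun x : Fin D => x ∉ S)), Fintype.card_perm, Fintype.card_subtype_compl,
    Fintype.card_fin, Fintype.card_coe]

lemma card_fiber (D : ℕ) (S : Finset (Fin D)) (g : {x // x ∈ S} → Fin D)
    (hg : Function.Injective g) :
    (Finset.univ.filter (fun π : Equiv.Perm (Fin D) =>
        ∀ x : {x // x ∈ S}, π x = g x)).card = (D - S.card)! := by
  classical
  have hmem : ∀ (x : Fin D) (hx : x ∈ S),
      (Equiv.extendSubtype (Equiv.ofInjective g hg)) x = g ⟨x, hx⟩ := by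
    intro x hx
    rw [Equiv.extendSubtype_apply_of_mem (Equiv.ofInjective g hg) x hx]
    rfl
  set π₀ := Equiv.extendSubtype (Equiv.ofInjective g hg) with hp0
  rw [← card_fix D S]
  refine (Finset.card_bij (fun σ _ => π₀ * σ) ?_ ?_ ?_).symm
  · intro σ hσ
    simp only [Finset.mem_filter, Finset.mem_univ, true_and] at hσ ⊢
    intro x
    simp only [Equiv.Perm.mul_apply, hσ x.1 x.2, hmem x.1 x.2]
  · intro σ₁ h1 σ₂ h2 h
    exact mul_left_cancel h
  · intro π hπ
    simp only [Finset.mem_filter, Finset.mem_univ, true_and] at hπ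
    refine ⟨π₀⁻¹ * π, ?_, ?_⟩
    · simp only [Finset.mem_filter, Finset.mem_univ, true_and]
      intro x hx
      have h2 := hπ ⟨x, hx⟩
      simp only [Equiv.Perm.mul_apply, h2, ← hmem x hx]
      exact π₀.symm_apply_apply x
    · simp

lemma card_perm_mapsTo (D : ℕ) (S C : Finset (Fin D)) :
    (Finset.univ.filter (fun π : Equiv.Perm (Fin D) => ∀ x ∈ S, π x ∈ C)).card
      = C.card.descFactorial S.card * (D - S.card)! := by
  classical
  rw [Finset.card_eq_sum_card_fiberwise
    (f := fun (π : Equiv.Perm (Fin D)) (x : {x // x ∈ S}) => π x)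
    (t := (Finset.univ : Finset ({x // x ∈ S} → Fin D))) (fun _ _ => Finset.mem_univ _)]
  have key : ∀ g : {x // x ∈ S} → Fin D,
      (((Finset.univ.filter (fun π : Equiv.Perm (Fin D) => ∀ x ∈ S, π x ∈ C)).filter
        (fun π => (fun x : {x // x ∈ S} => π x) = g)).card)
      = if Function.Injective g ∧ ∀ x, g x ∈ C then (D - S.card)! else 0 := by
    intro g
    split_ifs with h
    · rw [← card_fiber D S g h.1]
      congr 1
      ext π
      simp only [Finset.mem_filter, Finset.mem_univ, true_and]
      constructor
      · rintro ⟨-, h2⟩ x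
        exact congrFun h2 x
      · intro h2
        exact ⟨fun x hx => by rw [h2 ⟨x, hx⟩]; exact h.2 _, funext h2⟩
    · rw [Finset.card_eq_zero]
      ext π
      simp only [Finset.mem_filter, Finset.mem_univ, true_and, Finset.notMem_empty,
        iff_false, not_and]
      intro h1 h2
      apply h
      subst h2
      exact ⟨fun a b hab => Subtype.ext (π.injective hab), fun x => h1 x.1 x.2⟩
  rw [Finset.sum_congr rfl (fun g _ => key g), Finset.sum_ite, Finset.sum_const,
    Finset.sum_const, smul_eq_mul, smul_zero, add_zero]
  congr 1
  rw [← Fintype.card_subtype]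
  have e2 : {g : {x // x ∈ S} → Fin D // Function.Injective g ∧ ∀ x, g x ∈ C}
      ≃ ({x // x ∈ S} ↪ {y // y ∈ C}) :=
    { toFun := fun gh => ⟨fun x => ⟨gh.1 x, gh.2.2 x⟩,
        fun a b hab => gh.2.1 (by simpa [Subtype.ext_iff] using hab)⟩,
      invFun := fun e => ⟨fun x => (e x : Fin D),
        ⟨fun a b h => e.injective (Subtype.ext h), fun x => (e x).2⟩⟩,
      left_inv := fun gh => rfl, right_inv := fun e => rfl }
  rw [Fintype.card_congr e2, Fintype.card_embedding_eq, Fintype.card_coe, Fintype.card_coe]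

lemma bin_card (D b j : ℕ) (hb : 0 < b) (hjb : (j + 1) * b ≤ D) :
    (Finset.univ.filter (fun x : Fin D => x.val / b = j)).card = b := by
  classical
  have h1 : (Finset.univ.filter (fun x : Fin D => x.val / b = j)).card
      = ((Finset.range D).filter (fun n => n / b = j)).card := by
    apply Finset.card_bij (fun x _ => x.val)
    · intro x hx
      simp only [Finset.mem_filter, Finset.mem_univ, true_and] at hx
      simp [Finset.mem_range, x.2, hx]
    · intro x _ y _ h; exact Fin.ext h
    · intro n hn
      simp only [Finset.mem_filter, Finset.mem_range] at hn
      exact ⟨⟨n, hn.1⟩, by simp [hn.2], rfl⟩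
  rw [h1]
  have h2 : (Finset.range D).filter (fun n => n / b = j) = Finset.Ico (j * b) (j * b + b) := by
    ext n
    simp only [Finset.mem_filter, Finset.mem_range, Finset.mem_Ico]
    constructor
    · rintro ⟨-, rfl⟩
      refine ⟨Nat.div_mul_le_self n b, ?_⟩
      have h3 : n % b < b := Nat.mod_lt n hb
      have h4 : n / b * b + n % b = n := Nat.div_add_mod' n b
      have h5 : n / b * b ≤ n := Nat.div_mul_le_self n b
      omega
    · intro h
      have : n / b = j := Nat.div_eq_of_lt_le h.1 (by rw [add_mul, one_mul]; exact h.2)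
      refine ⟨lt_of_lt_of_le h.2 ?_, this⟩
      calc j * b + b = (j + 1) * b := by ring
        _ ≤ D := hjb
  rw [h2, Nat.card_Ico]
  omega

lemma hashBin_union (D k : ℕ) (S T : Finset (Fin D)) (j : ℕ) :
    hashBin D k (S ∪ T) j = hashBin D k S j ∪ hashBin D k T j :=
  Finset.filter_union _ _ _

lemma matched_iff (D k : ℕ) (S₁ S₂ : Finset (Fin D)) (j : ℕ) (π : Equiv.Perm (Fin D)) :
    matchedBin D k π S₁ S₂ j ↔
      ((hashBin D k ((S₁ ∪ S₂).image π) j).Nonempty ∧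
        ∃ u ∈ S₁ ∩ S₂,
          ((π u : Fin D) : WithTop (Fin D)) = (hashBin D k ((S₁ ∪ S₂).image π) j).min) := by
  classical
  have himg : (S₁ ∪ S₂).image π = S₁.image π ∪ S₂.image π := Finset.image_union _ _
  set H1 := hashBin D k (S₁.image π) j with hH1
  set H2 := hashBin D k (S₂.image π) j with hH2
  have hHU : hashBin D k ((S₁ ∪ S₂).image π) j = H1 ∪ H2 := by
    rw [himg, hashBin_union]
  constructor
  · rintro ⟨h1, h2, hmin⟩
    obtain ⟨m, hm⟩ := Finset.min_of_nonempty h1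
    have hm2 : H2.min = m := by rw [← hmin, hm]
    have hmem1 : m ∈ H1 := Finset.mem_of_min hm
    have hmem2 : m ∈ H2 := Finset.mem_of_min hm2
    have hmU : (H1 ∪ H2).min = (m : WithTop (Fin D)) := by
      apply le_antisymm (Finset.min_le (Finset.mem_union_left _ hmem1))
      apply Finset.le_min
      intro y hy
      rcases Finset.mem_union.mp hy with h | h
      · exact WithTop.coe_le_coe.mpr (Finset.min_le_of_eq h hm)
      · exact WithTop.coe_le_coe.mpr (Finset.min_le_of_eq h hm2)
    have hu1 : m ∈ S₁.image π := (Finset.mem_filter.mp hmem1).1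
    have hu2 : m ∈ S₂.image π := (Finset.mem_filter.mp hmem2).1
    obtain ⟨x, hx, hxm⟩ := Finset.mem_image.mp hu1
    obtain ⟨y, hy, hym⟩ := Finset.mem_image.mp hu2
    have hxy : y = x := π.injective (by rw [hxm, hym])
    refine ⟨?_, x, Finset.mem_inter.mpr ⟨hx, hxy ▸ hy⟩, ?_⟩
    · rw [hHU]; exact h1.mono Finset.subset_union_left
    · rw [hHU, hmU, hxm]
  · rintro ⟨hne, u, hu, hmin⟩
    rw [hHU] at hne hmin
    have hmem : π u ∈ H1 ∪ H2 := Finset.mem_of_min hmin.symm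
    have hbin : (π u).val / (D / k) = j := by
      rcases Finset.mem_union.mp hmem with h | h
      · exact (Finset.mem_filter.mp h).2
      · exact (Finset.mem_filter.mp h).2
    have huu := Finset.mem_inter.mp hu
    have hmem1 : π u ∈ H1 :=
      Finset.mem_filter.mpr ⟨Finset.mem_image_of_mem π huu.1, hbin⟩
    have hmem2 : π u ∈ H2 :=
      Finset.mem_filter.mpr ⟨Finset.mem_image_of_mem π huu.2, hbin⟩
    have hle1 : H1.min = ((π u : Fin D) : WithTop (Fin D)) :=
      le_antisymm (Finset.min_le hmem1)
        (by rw [hmin]; exact Finset.min_mono Finset.subset_union_left)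
    have hle2 : H2.min = ((π u : Fin D) : WithTop (Fin D)) :=
      le_antisymm (Finset.min_le hmem2)
        (by rw [hmin]; exact Finset.min_mono Finset.subset_union_right)
    exact ⟨⟨_, hmem1⟩, ⟨_, hmem2⟩, by rw [hle1, hle2]⟩

noncomputable def Hitset (D k : ℕ) (U : Finset (Fin D)) (j : ℕ) :
    Finset (Equiv.Perm (Fin D)) :=
  Finset.univ.filter (fun π => (hashBin D k (U.image π) j).Nonempty)

noncomputable def Aset (D k : ℕ) (U : Finset (Fin D)) (j : ℕ) (u : Fin D) :
    Finset (Equiv.Perm (Fin D)) :=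
  (Hitset D k U j).filter
    (fun π => ((π u : Fin D) : WithTop (Fin D)) = (hashBin D k (U.image π) j).min)

lemma image_swap_eq {D : ℕ} {U : Finset (Fin D)} {u v : Fin D} (hu : u ∈ U) (hv : v ∈ U) :
    U.image ⇑(Equiv.swap u v) = U := by
  apply Finset.eq_of_subset_of_card_le
  · intro y hy
    obtain ⟨x, hx, rfl⟩ := Finset.mem_image.mp hy
    rcases eq_or_ne x u with rfl | hxu
    · simpa [Equiv.swap_apply_left] using hv
    rcases eq_or_ne x v with rfl | hxv
    · simpa [Equiv.swap_apply_right] using hu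
    · rwa [Equiv.swap_apply_of_ne_of_ne hxu hxv]
  · rw [Finset.card_image_of_injective _ (Equiv.injective _)]

lemma image_mul_swap {D : ℕ} {U : Finset (Fin D)} {u v : Fin D} (hu : u ∈ U) (hv : v ∈ U)
    (π : Equiv.Perm (Fin D)) : U.image ⇑(π * Equiv.swap u v) = U.image ⇑π := by
  rw [show ⇑(π * Equiv.swap u v) = ⇑π ∘ ⇑(Equiv.swap u v) from rfl, ← Finset.image_image,
    image_swap_eq hu hv]

lemma Aset_card_eq {D k j : ℕ} {U : Finset (Fin D)} {u v : Fin D} (hu : u ∈ U) (hv : v ∈ U) :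
    (Aset D k U j u).card = (Aset D k U j v).card := by
  have key : ∀ w z : Fin D, w ∈ U → z ∈ U → ∀ π ∈ Aset D k U j w,
      π * Equiv.swap w z ∈ Aset D k U j z := by
    intro w z hw hz π hπ
    simp only [Aset, Hitset, Finset.mem_filter, Finset.mem_univ, true_and] at hπ ⊢
    rw [image_mul_swap hw hz]
    refine ⟨hπ.1, ?_⟩
    have : (π * Equiv.swap w z) z = π w := by
      simp [Equiv.Perm.mul_apply, Equiv.swap_apply_right]
    rw [this, hπ.2]
  apply Finset.card_bij' (fun π _ => π * Equiv.swap u v) (fun π _ => π * Equiv.swap v u)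
  · intro π hπ; exact key u v hu hv π hπ
  · intro π hπ; exact key v u hv hu π hπ
  · intro π hπ
    rw [Equiv.swap_comm v u]
    simp [mul_assoc]
  · intro π hπ
    rw [Equiv.swap_comm u v]
    simp [mul_assoc]

lemma hit_biUnion {D k j : ℕ} (U : Finset (Fin D)) :
    Hitset D k U j = U.biUnion (fun u => Aset D k U j u) := by
  ext π
  simp only [Finset.mem_biUnion, Aset, Finset.mem_filter]
  constructor
  · intro hπ
    have hπ' := hπ
    simp only [Hitset, Finset.mem_filter, Finset.mem_univ, true_and] at hπ'
    obtain ⟨m, hm⟩ := Finset.min_of_nonempty hπ'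
    have hmem : m ∈ hashBin D k (U.image π) j := Finset.mem_of_min hm
    have : m ∈ U.image π := (Finset.mem_filter.mp hmem).1
    obtain ⟨u, hu, rfl⟩ := Finset.mem_image.mp this
    exact ⟨u, hu, hπ, hm.symm⟩
  · rintro ⟨u, -, h, -⟩
    exact h

lemma Aset_disjoint {D k j : ℕ} (U : Finset (Fin D)) {u v : Fin D} (huv : u ≠ v) :
    Disjoint (Aset D k U j u) (Aset D k U j v) := by
  rw [Finset.disjoint_left]
  intro π hπu hπv
  simp only [Aset, Finset.mem_filter] at hπu hπv
  have : ((π u : Fin D) : WithTop (Fin D)) = ((π v : Fin D) : WithTop (Fin D)) := by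
    rw [hπu.2, hπv.2]
  exact huv (π.injective (WithTop.coe_eq_coe.mp this))

lemma hit_card_eq {D k j : ℕ} (U : Finset (Fin D)) :
    (Hitset D k U j).card = ∑ u ∈ U, (Aset D k U j u).card := by
  rw [hit_biUnion U]
  exact Finset.card_biUnion (fun u _ v _ huv => Aset_disjoint U huv)

lemma matched_card_eq {D k j : ℕ} (S₁ S₂ : Finset (Fin D)) :
    (Finset.univ.filter (fun π : Equiv.Perm (Fin D) => matchedBin D k π S₁ S₂ j)).card
      = ∑ u ∈ S₁ ∩ S₂, (Aset D k (S₁ ∪ S₂) j u).card := by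
  have : Finset.univ.filter (fun π : Equiv.Perm (Fin D) => matchedBin D k π S₁ S₂ j)
      = (S₁ ∩ S₂).biUnion (fun u => Aset D k (S₁ ∪ S₂) j u) := by
    ext π
    rw [Finset.mem_filter, Finset.mem_biUnion]
    simp only [Finset.mem_univ, true_and]
    rw [matched_iff]
    constructor
    · rintro ⟨hne, u, hu, hmin⟩
      refine ⟨u, hu, ?_⟩
      simp only [Aset, Hitset, Finset.mem_filter, Finset.mem_univ, true_and]
      exact ⟨hne, hmin⟩
    · rintro ⟨u, hu, h⟩
      simp only [Aset, Hitset, Finset.mem_filter, Finset.mem_univ, true_and] at h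
      exact ⟨h.1, u, hu, h.2⟩
  rw [this]
  exact Finset.card_biUnion (fun u _ v _ huv => Aset_disjoint _ huv)

lemma perbin_ratio {D k j f a : ℕ} (S₁ S₂ : Finset (Fin D))
    (hf : (S₁ ∪ S₂).card = f) (ha : (S₁ ∩ S₂).card = a) :
    f * (Finset.univ.filter (fun π : Equiv.Perm (Fin D) => matchedBin D k π S₁ S₂ j)).card
      = a * (Hitset D k (S₁ ∪ S₂) j).card := by
  classical
  rcases (S₁ ∪ S₂).eq_empty_or_nonempty with he | ⟨u₀, hu₀⟩
  · have h1 : S₁ ∩ S₂ = ∅ := by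
      rw [Finset.eq_empty_iff_forall_notMem] at he ⊢
      exact fun x hx => he x (Finset.mem_union_left _ (Finset.mem_inter.mp hx).1)
    subst hf ha
    rw [he, h1]
    simp [hit_card_eq, he]
  · have hconst : ∀ u ∈ S₁ ∪ S₂, (Aset D k (S₁ ∪ S₂) j u).card
        = (Aset D k (S₁ ∪ S₂) j u₀).card := fun u hu => Aset_card_eq hu hu₀
    have hA : (Finset.univ.filter
        (fun π : Equiv.Perm (Fin D) => matchedBin D k π S₁ S₂ j)).card
        = a * (Aset D k (S₁ ∪ S₂) j u₀).card := by
      rw [matched_card_eq,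
        Finset.sum_congr rfl (fun u hu => hconst u
          ((Finset.inter_subset_union) hu)),
        Finset.sum_const, ← ha, smul_eq_mul]
    have hH : (Hitset D k (S₁ ∪ S₂) j).card = f * (Aset D k (S₁ ∪ S₂) j u₀).card := by
      rw [hit_card_eq, Finset.sum_congr rfl hconst, Finset.sum_const, ← hf, smul_eq_mul]
    rw [hA, hH]
    ring

lemma hit_card_value {D k j : ℕ} (U : Finset (Fin D)) (hj : j < k) (hkD : k ∣ D)
    (hD : 0 < D) (hk : 0 < k) :
    (Hitset D k U j).card + (D - D / k).descFactorial U.card * (D - U.card)! = D ! := by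
  classical
  set b := D / k with hbdef
  have hb : 0 < b := Nat.div_pos (Nat.le_of_dvd hD hkD) hk
  have hbk : b * k = D := Nat.div_mul_cancel hkD
  have hjb : (j + 1) * b ≤ D := by
    calc (j + 1) * b ≤ k * b := Nat.mul_le_mul_right b hj
      _ = D := by rw [mul_comm]; exact hbk
  set C : Finset (Fin D) := Finset.univ.filter (fun y : Fin D => ¬ (y.val / b = j)) with hC
  have hCc : C.card = D - b := by
    have h2 : C = Finset.univ \ (Finset.univ.filter (fun x : Fin D => x.val / b = j)) := by
      ext x
      simp [hC]
    rw [h2, Finset.card_sdiff_of_subset (Finset.filter_subset _ _), bin_card D b j hb hjb,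
      Finset.card_univ, Fintype.card_fin]
  have hcompl : Finset.univ.filter
      (fun π : Equiv.Perm (Fin D) => ¬ (hashBin D k (U.image π) j).Nonempty)
      = Finset.univ.filter (fun π : Equiv.Perm (Fin D) => ∀ x ∈ U, π x ∈ C) := by
    ext π
    simp only [Finset.mem_filter, Finset.mem_univ, true_and, Finset.not_nonempty_iff_eq_empty]
    rw [hashBin, Finset.filter_eq_empty_iff]
    constructor
    · intro h x hx
      simp only [hC, Finset.mem_filter, Finset.mem_univ, true_and]
      exact h (Finset.mem_image_of_mem π hx)
    · intro h y hy
      obtain ⟨x, hx, rfl⟩ := Finset.mem_image.mp hy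
      have := h x hx
      simp only [hC, Finset.mem_filter, Finset.mem_univ, true_and] at this
      exact this
  have htot := Finset.card_filter_add_card_filter_not
    (s := (Finset.univ : Finset (Equiv.Perm (Fin D))))
    (p := fun π : Equiv.Perm (Fin D) => (hashBin D k (U.image π) j).Nonempty)
  rw [hcompl, card_perm_mapsTo, hCc, Finset.card_univ, Fintype.card_perm,
    Fintype.card_fin] at htot
  exact htot

/-- Expected number of matched bins:
`E(N_mat)/k = R·(1 - ∏_{j<f}(D(1-1/k)-j)/(D-j))`. -/
theorem stmt_7 (D k f₁ f₂ a f : ℕ) (R : ℝ) (hk : 2 ≤ k) (hkD : k ∣ D)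
    (S₁ S₂ : Finset (Fin D)) (h₁ : S₁.card = f₁) (h₂ : S₂.card = f₂)
    (ha : (S₁ ∩ S₂).card = a) (hf : (S₁ ∪ S₂).card = f) (hfeq : f = f₁ + f₂ - a)
    (hf1 : 1 ≤ f) (hfD : f ≤ D - D / k) (hR : R = (a : ℝ) / f) :
    ((∑ π : Equiv.Perm (Fin D), (Nmat D k π S₁ S₂ : ℝ)) /
        (Fintype.card (Equiv.Perm (Fin D)) : ℝ)) / (k : ℝ)
      = R * (1 - ∏ j ∈ Finset.range f, (((D : ℝ) * (1 - 1 / k) - j) / ((D : ℝ) - j))) := by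
  classical
  have hk0 : 0 < k := lt_of_lt_of_le two_pos hk
  have hfD' : f ≤ D := hfD.trans (Nat.sub_le _ _)
  have hD : 0 < D := lt_of_lt_of_le hf1 hfD'
  set g : ℕ := D - D / k with hg
  set E : ℕ := g.descFactorial f * (D - f)! with hE
  -- cast facts
  have hkR : (k : ℝ) ≠ 0 := Nat.cast_ne_zero.mpr (by omega)
  have hfR : (f : ℝ) ≠ 0 := Nat.cast_ne_zero.mpr (by omega)
  have hDfacR : ((D ! : ℕ) : ℝ) ≠ 0 := Nat.cast_ne_zero.mpr (Nat.factorial_ne_zero D)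
  have hbk : D / k * k = D := Nat.div_mul_cancel hkD
  have hbR : ((D / k : ℕ) : ℝ) = (D : ℝ) / (k : ℝ) := by
    field_simp
    exact_mod_cast hbk
  have hgR : ((g : ℕ) : ℝ) = (D : ℝ) * (1 - 1 / (k : ℝ)) := by
    rw [hg, Nat.cast_sub (Nat.div_le_self D k), hbR]
    field_simp
  -- swap the sums
  have hN : (∑ π : Equiv.Perm (Fin D), Nmat D k π S₁ S₂)
      = ∑ j ∈ Finset.range k, (Finset.univ.filter
          (fun π : Equiv.Perm (Fin D) => matchedBin D k π S₁ S₂ j)).card := by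
    simp only [Nmat, Finset.card_filter]
    rw [Finset.sum_comm]
  -- per-bin value
  have key : ∀ j ∈ Finset.range k,
      (((Finset.univ.filter
        (fun π : Equiv.Perm (Fin D) => matchedBin D k π S₁ S₂ j)).card : ℕ) : ℝ)
      = (a : ℝ) * (((D ! : ℕ) : ℝ) - (E : ℝ)) / f := by
    intro j hj
    have h1 := perbin_ratio (k := k) (j := j) S₁ S₂ hf ha
    have h2 := hit_card_value (S₁ ∪ S₂) (Finset.mem_range.mp hj) hkD hD hk0
    rw [hf] at h2
    have h3 : ((Hitset D k (S₁ ∪ S₂) j).card : ℝ) = ((D ! : ℕ) : ℝ) - (E : ℝ) := by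
      rw [hE, hg]
      rw [← h2]
      push_cast
      ring
    have h4 : (f : ℝ) * ((Finset.univ.filter
        (fun π : Equiv.Perm (Fin D) => matchedBin D k π S₁ S₂ j)).card : ℝ)
        = (a : ℝ) * (((D ! : ℕ) : ℝ) - (E : ℝ)) := by
      rw [← h3]
      exact_mod_cast congrArg (Nat.cast (R := ℝ)) h1
    field_simp at h4 ⊢
    linarith [h4]
  -- the product equals E / D!
  have hprod : (∏ j ∈ Finset.range f, (((D : ℝ) * (1 - 1 / k) - j) / ((D : ℝ) - j)))
      = (E : ℝ) / ((D ! : ℕ) : ℝ) := by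
    have cast_df : ∀ n : ℕ, f ≤ n →
        ((n.descFactorial f : ℕ) : ℝ) = ∏ i ∈ Finset.range f, ((n : ℝ) - i) := by
      intro n hn
      rw [Nat.descFactorial_eq_prod_range, Nat.cast_prod]
      exact Finset.prod_congr rfl (fun i hi =>
        Nat.cast_sub (le_of_lt (lt_of_lt_of_le (Finset.mem_range.mp hi) hn)))
    have hnum : ∀ j ∈ Finset.range f,
        ((D : ℝ) * (1 - 1 / k) - j) / ((D : ℝ) - j) = (((g : ℕ) : ℝ) - j) / ((D : ℝ) - j) := by
      intro j hj
      rw [hgR]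
    rw [Finset.prod_congr rfl hnum, Finset.prod_div_distrib, ← cast_df g hfD, ← cast_df D hfD']
    have hDdf : ((D.descFactorial f : ℕ) : ℝ) ≠ 0 := by
      rw [Nat.cast_ne_zero]
      intro h0
      rw [Nat.descFactorial_eq_zero_iff_lt] at h0
      omega
    have hfacD : ((D ! : ℕ) : ℝ) = ((D - f)! : ℝ) * ((D.descFactorial f : ℕ) : ℝ) := by
      rw [← Nat.cast_mul, Nat.factorial_mul_descFactorial hfD']
    rw [hE, hfacD]
    push_cast
    have hDmf : ((D - f)! : ℝ) ≠ 0 := Nat.cast_ne_zero.mpr (Nat.factorial_ne_zero _)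
    field_simp
  -- assemble
  have hsum : (∑ π : Equiv.Perm (Fin D), (Nmat D k π S₁ S₂ : ℝ))
      = (k : ℝ) * ((a : ℝ) * (((D ! : ℕ) : ℝ) - (E : ℝ)) / f) := by
    rw [← Nat.cast_sum, hN, Nat.cast_sum, Finset.sum_congr rfl key, Finset.sum_const,
      Finset.card_range, nsmul_eq_mul]
  rw [hsum, hprod, hR, Fintype.card_perm, Fintype.card_fin]
  field_simp
end

section
/- For all integers f ≥ 2 and k ≥ 2, the function g(f;k) = (1/(1-(1-1/k)^f))·(1 + 1/(f-1)) - k/(f-1) satisfies g(f;k) ≤ 1. -/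
/-- `g(f;k) = (1/(1-(1-1/k)^f))·(1+1/(f-1)) - k/(f-1) ≤ 1` for integers `f ≥ 2`, `k ≥ 2`. -/
theorem stmt_14 (f k : ℕ) (hf : 2 ≤ f) (hk : 2 ≤ k) :
    (1 / (1 - (1 - 1 / (k : ℝ)) ^ f)) * (1 + 1 / ((f : ℝ) - 1)) - (k : ℝ) / ((f : ℝ) - 1)
      ≤ 1 := by
  have hK : (2:ℝ) ≤ (k:ℝ) := by exact_mod_cast hk
  have hF : (2:ℝ) ≤ (f:ℝ) := by exact_mod_cast hf
  have hK1 : (1:ℝ) < (k:ℝ) := by linarith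
  have hF1 : (0:ℝ) < (f:ℝ) - 1 := by linarith
  set K := (k:ℝ)
  set F := (f:ℝ)
  set q : ℝ := 1 - 1/K with hq
  have hqpos : 0 < q := by
    have : 1/K < 1 := by rw [div_lt_one (by linarith)]; linarith
    simp only [hq]; linarith
  have hqlt : q < 1 := by
    have : 0 < 1/K := by positivity
    simp [hq]; linarith
  have hqf1 : q ^ f < 1 := pow_lt_one₀ hqpos.le hqlt (by omega)
  have hD : 0 < 1 - q ^ f := by linarith
  have hx : (-2:ℝ) ≤ 1/(K-1) := by
    have : (0:ℝ) ≤ 1/(K-1) := by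
      apply div_nonneg <;> linarith
    linarith
  have bern : 1 + (f:ℕ) * (1/(K-1)) ≤ (1 + 1/(K-1)) ^ f := one_add_mul_le_pow hx f
  have hK1ne : K - 1 ≠ 0 := by linarith
  have hmul : (1 + 1/(K-1)) * q = 1 := by
    field_simp [hq]
    rw [hq, sub_add_cancel, mul_sub, mul_one, mul_one_div_cancel (by linarith)]
  have hpow : (1 + 1/(K-1)) ^ f * q ^ f = 1 := by
    rw [← mul_pow, hmul, one_pow]
  have hqfpos : 0 < q ^ f := pow_pos hqpos f
  have key : F ≤ (1 - q ^ f) * (K + F - 1) := by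
    have h1 : (1 + F * (1/(K-1))) * q ^ f ≤ 1 := by
      calc (1 + F * (1/(K-1))) * q ^ f ≤ (1 + 1/(K-1)) ^ f * q ^ f := by
            apply mul_le_mul_of_nonneg_right _ hqfpos.le
            exact_mod_cast bern
        _ = 1 := hpow
    have hK1' : (0:ℝ) < K - 1 := by linarith
    have h2 : ((K-1) + F) * q ^ f ≤ K - 1 := by
      calc ((K-1)+F)*q^f = (K-1)*((1 + F*(1/(K-1)))*q^f) := by field_simp
        _ ≤ (K-1)*1 := mul_le_mul_of_nonneg_left h1 hK1'.le
        _ = K-1 := mul_one _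
    have hexp : (1-q^f)*(K+F-1) = (K+F-1) - ((K-1)+F)*q^f := by ring
    linarith
  have h1 : (1 / (1 - q ^ f)) * (1 + 1 / (F - 1)) = F / ((1 - q ^ f) * (F - 1)) := by
    field_simp
    ring
  rw [sub_le_iff_le_add, h1, div_le_iff₀ (by positivity)]
  have hexp : (1 + K/(F-1)) * ((1-q^f)*(F-1)) = (1-q^f)*(K+F-1) := by
    field_simp
    ring
  linarith
end

section
/- For all integers f ≥ 1 and k ≥ 2: (f + k - 1)·(1 - (1 - 1/k)^f) - f ≥ 0, with equality iff f = 1. -/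
/-- Auxiliary natural-number inequality: `m^n·(n+1+m) ≤ (m+1)^(n+1)`, strict when `n ≥ 1`. -/
lemma stmt_15_aux (m : ℕ) (hm : 1 ≤ m) :
    ∀ n : ℕ, m ^ n * (n + 1 + m) ≤ (m + 1) ^ (n + 1) ∧
      (1 ≤ n → m ^ n * (n + 1 + m) < (m + 1) ^ (n + 1)) := by
  intro n
  induction n with
  | zero => exact ⟨by simp; omega, by omega⟩
  | succ n ih =>
    have e1 : m ^ (n + 1) * (n + 1 + 1 + m) + m ^ n * (n + 1)
        = (m + 1) * (m ^ n * (n + 1 + m)) := by ring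
    have h1 : (m + 1) * (m ^ n * (n + 1 + m)) ≤ (m + 1) * (m + 1) ^ (n + 1) :=
      Nat.mul_le_mul_left _ ih.1
    have e2 : (m + 1) ^ (n + 1 + 1) = (m + 1) * (m + 1) ^ (n + 1) := pow_succ' _ _
    have hpos : 1 ≤ m ^ n * (n + 1) :=
      Nat.one_le_iff_ne_zero.2 (by positivity)
    have hlt : m ^ (n + 1) * (n + 1 + 1 + m) < (m + 1) ^ (n + 1 + 1) := by omega
    exact ⟨le_of_lt hlt, fun _ => hlt⟩

/-- `h(f;k) = (f+k-1)·(1-(1-1/k)^f) - f ≥ 0` for `f ≥ 1`, `k ≥ 2`, with equality iff `f = 1`. -/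
theorem stmt_15 (f k : ℕ) (hf : 1 ≤ f) (hk : 2 ≤ k) :
    0 ≤ ((f : ℝ) + (k : ℝ) - 1) * (1 - (1 - 1 / (k : ℝ)) ^ f) - (f : ℝ) ∧
    (((f : ℝ) + (k : ℝ) - 1) * (1 - (1 - 1 / (k : ℝ)) ^ f) - (f : ℝ) = 0 ↔ f = 1) := by
  have hk1 : 1 ≤ k := by omega
  have ha2 : (2 : ℝ) ≤ (k : ℝ) := by exact_mod_cast hk
  have ha0 : (0 : ℝ) < (k : ℝ) := by linarith
  have hc0 : (0 : ℝ) < (k : ℝ) - 1 := by linarith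
  have hapos : (0 : ℝ) < (k : ℝ) ^ f := pow_pos ha0 f
  have hm1 : (k - 1) + 1 = k := by omega
  have hfe : (f - 1) + 1 = f := by omega
  -- the natural-number inequality, instantiated
  have hnat := stmt_15_aux (k - 1) (by omega) (f - 1)
  rw [hm1, hfe] at hnat
  -- cast it to ℝ
  have hR : ((k : ℝ) - 1) ^ (f - 1) * ((f : ℝ) + ((k : ℝ) - 1)) ≤ (k : ℝ) ^ f := by
    have h := (Nat.cast_le (α := ℝ)).2 hnat.1
    push_cast [Nat.cast_sub hk1] at h
    convert h using 2
  have hRlt : 2 ≤ f →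
      ((k : ℝ) - 1) ^ (f - 1) * ((f : ℝ) + ((k : ℝ) - 1)) < (k : ℝ) ^ f := by
    intro h2
    have h := (Nat.cast_lt (α := ℝ)).2 (hnat.2 (by omega))
    push_cast [Nat.cast_sub hk1] at h
    convert h using 2
  have hX : (0 : ℝ) ≤ ((k : ℝ) - 1) ^ (f - 1) := by positivity
  -- key algebraic identity
  have hq : (1 - 1 / (k : ℝ)) ^ f = ((k : ℝ) - 1) ^ f / (k : ℝ) ^ f := by
    rw [← div_pow]; congr 1; field_simp
  have hpowsplit : ((k : ℝ) - 1) ^ f = ((k : ℝ) - 1) ^ (f - 1) * ((k : ℝ) - 1) := by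
    rw [← pow_succ, hfe]
  have hkey : ((f : ℝ) + (k : ℝ) - 1) * (1 - (1 - 1 / (k : ℝ)) ^ f) - (f : ℝ)
      = ((k : ℝ) - 1) * ((k : ℝ) ^ f
          - ((k : ℝ) - 1) ^ (f - 1) * ((f : ℝ) + (k : ℝ) - 1)) / (k : ℝ) ^ f := by
    rw [hq, hpowsplit]
    field_simp
    ring
  rw [hkey]
  have hinner : (0 : ℝ) ≤ (k : ℝ) ^ f
      - ((k : ℝ) - 1) ^ (f - 1) * ((f : ℝ) + (k : ℝ) - 1) := by nlinarith [hR]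
  constructor
  · exact div_nonneg (by nlinarith) hapos.le
  · constructor
    · intro h0
      by_contra hne
      have h2 : 2 ≤ f := by omega
      have hstrict := hRlt h2
      have hnum : ((k : ℝ) - 1) * ((k : ℝ) ^ f
          - ((k : ℝ) - 1) ^ (f - 1) * ((f : ℝ) + (k : ℝ) - 1)) = 0 := by
        field_simp at h0
        linarith [h0]
      nlinarith [hnum, hstrict, hc0]
    · intro h1
      subst h1
      norm_num
end
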